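/- Let $u_h(t) \in V_h^k$ be a solution of the semi-discrete UWDG scheme for the linear Schr\"odinger equation. Then the discrete $L^2$ energy is conserved in time: $\frac{d}{dt}\|u_h(t)\|_{L^2(I)}^2 = 0$ for all $t$. -/

import Mathlib

open scoped BigOperators Classical
open MeasureTheory

noncomputable section

/-- Legendre polynomial of degree `m` on `[-1,1]`, via Rodrigues' formula. -/
def legendreP (m : ℕ) : Polynomial ℝ :=
  Polynomial.C (1 / ((2 : ℝ) ^ m * (Nat.factorial m : ℝ))) *
    ((fun q : Polynomial ℝ => Polynomial.derivative q)^[m] ((Polynomial.X ^ 2 - 1) ^ m))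

/-- Derivative of a broken function, taken cell by cell. -/
def dxB {N : ℕ} (v : Fin N → ℝ → ℂ) : Fin N → ℝ → ℂ := fun j x => deriv (v j) x

def Gmat (α₁ β₁ β₂ : ℝ) : Matrix (Fin 2) (Fin 2) ℝ :=
  !![1 / 2 + α₁, -β₂; -β₁, 1 / 2 - α₁]

def Hmat (α₁ β₁ β₂ : ℝ) : Matrix (Fin 2) (Fin 2) ℝ :=
  !![1 / 2 - α₁, β₂; β₁, 1 / 2 + α₁]

def GmatC (α₁ β₁ β₂ : ℝ) : Matrix (Fin 2) (Fin 2) ℂ :=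
  (Gmat α₁ β₁ β₂).map fun x : ℝ => (x : ℂ)

def HmatC (α₁ β₁ β₂ : ℝ) : Matrix (Fin 2) (Fin 2) ℂ :=
  (Hmat α₁ β₁ β₂).map fun x : ℝ => (x : ℂ)

def colMat (v w : Fin 2 → ℝ) : Matrix (Fin 2) (Fin 2) ℝ :=
  Matrix.of ![![v 0, w 0], ![v 1, w 1]]

/-- `ℓ^∞` norm of a 2-vector. -/
def vNormInf (v : Fin 2 → ℝ) : ℝ := max |v 0| |v 1|

/-- `ℓ^∞` operator norm (max row sum) of a 2×2 matrix. -/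
def mNormInf (A : Matrix (Fin 2) (Fin 2) ℝ) : ℝ :=
  max (|A 0 0| + |A 0 1|) (|A 1 0| + |A 1 1|)

/-- Value/derivative trace vector of a function at a point. -/
def vvec (f : ℝ → ℂ) (x : ℝ) : Fin 2 → ℂ := ![f x, deriv f x]

/-- `H^l`-norm of a (real) test function on `[aa,bb]`. -/
def Hl (aa bb : ℝ) (l : ℕ) (φ : ℝ → ℝ) : ℝ :=
  Real.sqrt (∑ s ∈ Finset.range (l + 1), ∫ x in aa..bb, (iteratedDeriv s φ x) ^ 2)

/-- B-splines: `bspline 0 = ψ⁽¹⁾` is the indicator of `[-1/2,1/2]`,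
and `bspline n = ψ⁽ⁿ⁺¹⁾` is obtained by repeated convolution. -/
def bspline : ℕ → ℝ → ℝ
  | 0 => Set.indicator (Set.Icc (-(1 : ℝ) / 2) (1 / 2)) fun _ => 1
  | n + 1 => fun x => ∫ y in (-(1 : ℝ) / 2)..(1 / 2), bspline n (x - y)

/-- Divided difference operator with step `h`. -/
def dhop (h : ℝ) (f : ℝ → ℂ) : ℝ → ℂ := fun x => (f (x + h / 2) - f (x - h / 2)) / h

/-- Iterated divided differences `d_h^n`. -/
def dhiter (h : ℝ) (n : ℕ) (f : ℝ → ℂ) : ℝ → ℂ := (dhop h)^[n] f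

/-- `u` is a smooth, spatially periodic (period `L`) exact solution of `i uₜ + uₓₓ = 0`. -/
def IsSchrod (L : ℝ) (u : ℝ → ℝ → ℂ) : Prop :=
  (∀ t, ContDiff ℝ (⊤ : ℕ∞) (u t)) ∧ (∀ x, ContDiff ℝ (⊤ : ℕ∞) fun t => u t x) ∧
    (∀ t, Function.Periodic (u t) L) ∧
    (∀ t x, Complex.I * deriv (fun s => u s x) t + iteratedDeriv 2 (u t) x = 0)

/-- A one-dimensional mesh `a = x_{1/2} < x_{3/2} < ⋯ < x_{N+1/2} = b`. -/
structure Mesh (N : ℕ) where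
  pt : Fin (N + 1) → ℝ
  strictMono : StrictMono pt

namespace Mesh

variable {N : ℕ} [NeZero N] (M : Mesh N)

def lo (j : Fin N) : ℝ := M.pt j.castSucc
def hi (j : Fin N) : ℝ := M.pt j.succ
def hcell (j : Fin N) : ℝ := M.hi j - M.lo j
def hmax : ℝ := ⨆ j, M.hcell j
def mid (j : Fin N) : ℝ := (M.lo j + M.hi j) / 2

/-- Mesh regularity: `h / min_j h_j < σ`. -/
def Regular (σ : ℝ) : Prop := ∀ j, M.hmax < σ * M.hcell j

def Uniform : Prop := ∀ j j' : Fin N, M.hcell j = M.hcell j'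

/-- Translate a mesh by `c`. -/
def shift (c : ℝ) : Mesh N where
  pt := fun i => M.pt i + c
  strictMono := fun i i' h => by simpa using add_lt_add_right (M.strictMono h) c

/-- The Legendre polynomial of degree `m` scaled to cell `j`. -/
def Lsc (j : Fin N) (m : ℕ) : ℝ → ℝ :=
  fun x => (legendreP m).eval ((x - M.mid j) / (M.hcell j / 2))

/-- Membership in the broken piecewise-polynomial space `V_h^k`. -/
def InVhk (_M : Mesh N) (k : ℕ) (v : Fin N → ℝ → ℂ) : Prop :=
  ∀ j, ∃ p : Polynomial ℂ, p.natDegree ≤ k ∧ v j = fun x : ℝ => p.eval (x : ℂ)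

/-- Broken `C^n` regularity on the mesh (rendering broken Sobolev regularity). -/
def BrokenC (n : ℕ∞) (v : Fin N → ℝ → ℂ) : Prop :=
  ∀ j, ContDiffOn ℝ n (v j) (Set.Icc (M.lo j) (M.hi j))

/-- Trace from the left at interface `x_{j+1/2}`. -/
def trM (v : Fin N → ℝ → ℂ) (j : Fin N) : ℂ := v j (M.hi j)

/-- Trace from the right at interface `x_{j+1/2}` (periodically). -/
def trP (v : Fin N → ℝ → ℂ) (j : Fin N) : ℂ := v (j + 1) (M.lo (j + 1))

/-- Jump `[v]` at interface `x_{j+1/2}`. -/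
def jmp (v : Fin N → ℝ → ℂ) (j : Fin N) : ℂ := M.trP v j - M.trM v j

/-- Average `{v}` at interface `x_{j+1/2}`. -/
def avg (v : Fin N → ℝ → ℂ) (j : Fin N) : ℂ := (M.trP v j + M.trM v j) / 2

/-- Numerical flux `v̂`. -/
def hatF (α₁ β₂ : ℝ) (v : Fin N → ℝ → ℂ) (j : Fin N) : ℂ :=
  M.avg v j - (α₁ : ℂ) * M.jmp v j + (β₂ : ℂ) * M.jmp (dxB v) j

/-- Numerical flux `ṽₓ`. -/
def tilF (α₁ β₁ : ℝ) (v : Fin N → ℝ → ℂ) (j : Fin N) : ℂ :=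
  M.avg (dxB v) j + (α₁ : ℂ) * M.jmp (dxB v) j + (β₁ : ℂ) * M.jmp v j

/-- The UWDG bilinear form `A(u,v)`. -/
def Aform (α₁ β₁ β₂ : ℝ) (u v : Fin N → ℝ → ℂ) : ℂ :=
  (∑ j, ∫ x in M.lo j..M.hi j, u j x * deriv (deriv (v j)) x) +
    ∑ j, (M.hatF α₁ β₂ u j * M.jmp (dxB v) j - M.tilF α₁ β₁ u j * M.jmp v j)

/-- Broken `L²` norm. -/
def l2B (v : Fin N → ℝ → ℂ) : ℝ :=
  Real.sqrt (∑ j, ∫ x in M.lo j..M.hi j, ‖v j x‖ ^ 2)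

/-- Broken `L^∞` norm. -/
def linfB (v : Fin N → ℝ → ℂ) : ℝ :=
  ⨆ j, ⨆ x : Set.Icc (M.lo j) (M.hi j), ‖v j (x : ℝ)‖

/-- Legendre coefficient `u_{j,m}` of a function on cell `j`. -/
def lcoef (u : ℝ → ℂ) (j : Fin N) (m : ℕ) : ℂ :=
  (((2 * (m : ℝ) + 1) / M.hcell j : ℝ) : ℂ) *
    ∫ x in M.lo j..M.hi j, u x * ((M.Lsc j m x : ℝ) : ℂ)

/-- Legendre coefficient of a broken function on cell `j`. -/
def lcoefB (v : Fin N → ℝ → ℂ) (j : Fin N) (m : ℕ) : ℂ := M.lcoef (v j) j m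

/-- The vector `L_{j,m}^-`. -/
def LvM (j : Fin N) (m : ℕ) : Fin 2 → ℝ :=
  ![M.Lsc j m (M.hi j), 2 / M.hcell j * deriv (M.Lsc j m) (M.hi j)]

/-- The vector `L_{j,m}^+`. -/
def LvP (j : Fin N) (m : ℕ) : Fin 2 → ℝ :=
  ![M.Lsc j m (M.lo j), 2 / M.hcell j * deriv (M.Lsc j m) (M.lo j)]

/-- The matrix `A_j = G [L_{j,k-1}^-, L_{j,k}^-]`. -/
def Amat (k : ℕ) (α₁ β₁ β₂ : ℝ) (j : Fin N) : Matrix (Fin 2) (Fin 2) ℝ :=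
  Gmat α₁ β₁ β₂ * colMat (M.LvM j (k - 1)) (M.LvM j k)

/-- The matrix `B_j = H [L_{j,k-1}^+, L_{j,k}^+]`. -/
def Bmat (k : ℕ) (α₁ β₁ β₂ : ℝ) (j : Fin N) : Matrix (Fin 2) (Fin 2) ℝ :=
  Hmat α₁ β₁ β₂ * colMat (M.LvP j (k - 1)) (M.LvP j k)

/-- The vector `𝓜_{j,m} = (A_j + B_j)⁻¹ (G L_{j,m}^- + H L_{j,m}^+)`. -/
def Mjm (k : ℕ) (α₁ β₁ β₂ : ℝ) (j : Fin N) (m : ℕ) : Fin 2 → ℝ :=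
  (M.Amat k α₁ β₁ β₂ j + M.Bmat k α₁ β₁ β₂ j)⁻¹.mulVec
    ((Gmat α₁ β₁ β₂).mulVec (M.LvM j m) + (Hmat α₁ β₁ β₂).mulVec (M.LvP j m))

def Gam (k : ℕ) (α₁ β₁ β₂ : ℝ) (j : Fin N) : ℝ :=
  β₁ + β₂ / M.hcell j ^ 2 * (k : ℝ) ^ 2 * ((k : ℝ) ^ 2 - 1) -
    2 * (k : ℝ) ^ 2 / M.hcell j * (α₁ ^ 2 + β₁ * β₂ + 1 / 4)

def Lam (k : ℕ) (α₁ β₁ β₂ : ℝ) (j : Fin N) : ℝ :=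
  -(2 * (k : ℝ) / M.hcell j) * (α₁ ^ 2 + β₁ * β₂ - 1 / 4)

/-- The ratio `Γ/Λ` (on a uniform mesh it does not depend on the cell). -/
def ratGL (k : ℕ) (α₁ β₁ β₂ : ℝ) : ℝ :=
  M.Gam k α₁ β₁ β₂ 0 / M.Lam k α₁ β₁ β₂ 0

/-- Assumption A1 (for scale invariant fluxes). -/
def A1c (k : ℕ) (α₁ β₁ β₂ : ℝ) : Prop :=
  α₁ ^ 2 + β₁ * β₂ = 1 / 4 ∧ ∀ j, M.Gam k α₁ β₁ β₂ j ≠ 0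

/-- Assumption A2 (for scale invariant fluxes). -/
def A2c (k : ℕ) (α₁ β₁ β₂ : ℝ) : Prop :=
  M.Uniform ∧ α₁ ^ 2 + β₁ * β₂ ≠ 1 / 4 ∧ 1 < |M.ratGL k α₁ β₁ β₂|

/-- Assumption A3 (for scale invariant fluxes). -/
def A3c (k : ℕ) (α₁ β₁ β₂ : ℝ) : Prop :=
  M.Uniform ∧ α₁ ^ 2 + β₁ * β₂ ≠ 1 / 4 ∧
    ((|M.ratGL k α₁ β₁ β₂| = 1 ∧ Odd N ∧
        ((-1 : ℂ) ^ (k + 1) * ((M.ratGL k α₁ β₁ β₂ : ℝ) : ℂ)) ^ N ≠ 1) ∨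
      (|M.ratGL k α₁ β₁ β₂| < 1 ∧
        ((-1 : ℂ) ^ (k + 1) * ((M.ratGL k α₁ β₁ β₂ : ℝ) : ℂ) +
            Complex.I * ((Real.sqrt (1 - M.ratGL k α₁ β₁ β₂ ^ 2) : ℝ) : ℂ)) ^ N ≠ 1))

/-- Any one of the assumptions A1/A2/A3. -/
def A123 (k : ℕ) (α₁ β₁ β₂ : ℝ) : Prop :=
  M.A1c k α₁ β₁ β₂ ∨ M.A2c k α₁ β₁ β₂ ∨ M.A3c k α₁ β₁ β₂

/-- The projection `P⋆ₕ`. -/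
def IsPstar (k : ℕ) (α₁ β₁ β₂ : ℝ) (u : ℝ → ℂ) (P : Fin N → ℝ → ℂ) : Prop :=
  M.InVhk k P ∧
    (∀ j (q : Polynomial ℂ), q.natDegree ≤ k - 2 →
      (∫ x in M.lo j..M.hi j, (P j x - u x) * q.eval (x : ℂ)) = 0) ∧
    (∀ j, M.hatF α₁ β₂ P j = u (M.hi j)) ∧
    (∀ j, M.tilF α₁ β₁ P j = deriv u (M.hi j))

/-- The local (cell-by-cell) flux conditions. -/
def LocFluxCond (α₁ β₁ β₂ : ℝ) (u : ℝ → ℂ) (P : Fin N → ℝ → ℂ) : Prop :=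
  ∀ j, (GmatC α₁ β₁ β₂).mulVec (vvec (P j) (M.hi j)) +
        (HmatC α₁ β₁ β₂).mulVec (vvec (P j) (M.lo j)) =
      (GmatC α₁ β₁ β₂).mulVec (vvec u (M.hi j)) +
        (HmatC α₁ β₁ β₂).mulVec (vvec u (M.lo j))

/-- The local projection `P†ₕ`. -/
def IsPdag (k : ℕ) (α₁ β₁ β₂ : ℝ) (u : ℝ → ℂ) (P : Fin N → ℝ → ℂ) : Prop :=
  M.InVhk k P ∧
    (∀ j (q : Polynomial ℂ), q.natDegree ≤ k - 2 →
      (∫ x in M.lo j..M.hi j, (P j x - u x) * q.eval (x : ℂ)) = 0) ∧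
    M.LocFluxCond α₁ β₁ β₂ u P

/-- The correction-function relation: `w` corrects against `wprevt = ∂ₜ w_{q-1}`. -/
def IsCorrection (k : ℕ) (α₁ β₁ β₂ : ℝ) (w wprevt : Fin N → ℝ → ℂ) : Prop :=
  M.InVhk k w ∧
    (∀ j (q : Polynomial ℂ), 2 ≤ q.natDegree → q.natDegree ≤ k →
      (∫ x in M.lo j..M.hi j,
          w j x * (Polynomial.derivative (Polynomial.derivative q)).eval (x : ℂ)) =
        -Complex.I * ∫ x in M.lo j..M.hi j, wprevt j x * q.eval (x : ℂ)) ∧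
    (∀ j, M.hatF α₁ β₂ w j = 0) ∧ (∀ j, M.tilF α₁ β₁ w j = 0)

/-- `uh` (with pointwise time derivative `uht`) is a semidiscrete UWDG solution. -/
def IsUWDG (k : ℕ) (α₁ β₁ β₂ : ℝ) (uh uht : ℝ → Fin N → ℝ → ℂ) : Prop :=
  (∀ t, M.InVhk k (uh t)) ∧
    (∀ t j x, HasDerivAt (fun s => uh s j x) (uht t j x) t) ∧
    (∀ (t : ℝ) (v : Fin N → ℝ → ℂ), M.InVhk k v →
      (∑ j, ∫ x in M.lo j..M.hi j, uht t j x * v j x) -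
          Complex.I * M.Aform α₁ β₁ β₂ (uh t) v = 0)

/-- The family of correction functions `w_q` (`1 ≤ q ≤ Q`) together with all their time
derivatives `wd q r = ∂ₜʳ w_q`, the projection `Pst t = P⋆ₕ u(t)` and the time derivatives
`W0d r = ∂ₜʳ w₀` of `w₀ = u - P⋆ₕ u`. -/
def CorrectionFamily (k Q : ℕ) (α₁ β₁ β₂ : ℝ) (u : ℝ → ℝ → ℂ)
    (Pst : ℝ → Fin N → ℝ → ℂ) (W0d : ℕ → ℝ → Fin N → ℝ → ℂ)
    (wd : ℕ → ℕ → ℝ → Fin N → ℝ → ℂ) : Prop :=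
  (∀ t, M.IsPstar k α₁ β₁ β₂ (u t) (Pst t)) ∧
    (∀ t j x, W0d 0 t j x = u t x - Pst t j x) ∧
    (∀ r t j x, HasDerivAt (fun s => W0d r s j x) (W0d (r + 1) t j x) t) ∧
    (∀ q, 1 ≤ q → q ≤ Q → ∀ r t, M.InVhk k (wd q r t)) ∧
    (∀ q, 1 ≤ q → q ≤ Q → ∀ r t j x,
      HasDerivAt (fun s => wd q r s j x) (wd q (r + 1) t j x) t) ∧
    (1 ≤ Q → ∀ t, M.IsCorrection k α₁ β₁ β₂ (wd 1 0 t) (W0d 1 t)) ∧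
    (∀ q, 2 ≤ q → q ≤ Q → ∀ t, M.IsCorrection k α₁ β₁ β₂ (wd q 0 t) (wd (q - 1) 1 t))

/-- Cells whose length differs from that of at least one (periodic) neighbour. -/
def NUset : Finset (Fin N) :=
  Finset.univ.filter fun j => M.hcell j ≠ M.hcell (j + 1) ∨ M.hcell j ≠ M.hcell (j - 1)

/-- The function `R_{j,m} = L_{j,m} - [L_{j,k-1}, L_{j,k}] 𝓜_{j,m}`. -/
def Rfun (k : ℕ) (α₁ β₁ β₂ : ℝ) (j : Fin N) (m : ℕ) : ℝ → ℝ := fun x =>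
  M.Lsc j m x -
    (M.Lsc j (k - 1) x * M.Mjm k α₁ β₁ β₂ j m 0 + M.Lsc j k x * M.Mjm k α₁ β₁ β₂ j m 1)

end Mesh


lemma polyEval_hasDerivAt (p : Polynomial ℂ) (x : ℝ) :
    HasDerivAt (fun y : ℝ => p.eval (y:ℂ)) (p.derivative.eval (x:ℂ)) x :=
  (p.hasDerivAt (x:ℂ)).comp_ofReal

lemma deriv_polyEval (p : Polynomial ℂ) :
    deriv (fun y : ℝ => p.eval (y:ℂ)) = fun y : ℝ => p.derivative.eval (y:ℂ) :=
  funext fun x => (polyEval_hasDerivAt p x).deriv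

lemma contPolyEval (p : Polynomial ℂ) : Continuous fun y : ℝ => p.eval (y:ℂ) :=
  p.continuous.comp Complex.continuous_ofReal

lemma conj_polyEval (p : Polynomial ℂ) (x : ℝ) :
    (starRingEnd ℂ) (p.eval (x:ℂ)) = (p.map (starRingEnd ℂ)).eval (x:ℂ) := by
  rw [Polynomial.eval_map]
  simp [Polynomial.eval₂_eq_sum_range, Polynomial.eval_eq_sum_range, map_sum]

lemma intervalIntegral_conj (f : ℝ → ℂ) (a b : ℝ) :
    (∫ x in a..b, (starRingEnd ℂ) (f x)) = (starRingEnd ℂ) (∫ x in a..b, f x) := by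
  simp [intervalIntegral, ← integral_conj, map_sub]

lemma interface_id (α₁ β₁ β₂ : ℝ) (um up uxm uxp vm vp vxm vxp : ℂ) :
    ((um*vxm - uxm*vm) - (up*vxp - uxp*vp))
    + ((((up+um)/2 - (α₁:ℂ)*(up-um) + (β₂:ℂ)*(uxp-uxm)) * (vxp - vxm)
        - ((uxp+uxm)/2 + (α₁:ℂ)*(uxp-uxm) + (β₁:ℂ)*(up-um)) * (vp - vm))
      - (((vp+vm)/2 - (α₁:ℂ)*(vp-vm) + (β₂:ℂ)*(vxp-vxm)) * (uxp - uxm)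
        - ((vxp+vxm)/2 + (α₁:ℂ)*(vxp-vxm) + (β₁:ℂ)*(vp-vm)) * (up - um))) = 0 := by
  ring

lemma poly_ibp (p q : Polynomial ℂ) (a b : ℝ) :
    ∫ x in a..b, p.eval (x:ℂ) * (q.derivative.derivative).eval (x:ℂ) =
      (p.eval (b:ℂ) * q.derivative.eval (b:ℂ) - p.derivative.eval (b:ℂ) * q.eval (b:ℂ))
      - (p.eval (a:ℂ) * q.derivative.eval (a:ℂ) - p.derivative.eval (a:ℂ) * q.eval (a:ℂ))
      + ∫ x in a..b, (p.derivative.derivative).eval (x:ℂ) * q.eval (x:ℂ) := by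
  have key : ∫ x in a..b, (p.eval (x:ℂ) * (q.derivative.derivative).eval (x:ℂ)
      - (p.derivative.derivative).eval (x:ℂ) * q.eval (x:ℂ)) =
      (p.eval (b:ℂ) * q.derivative.eval (b:ℂ) - p.derivative.eval (b:ℂ) * q.eval (b:ℂ))
      - (p.eval (a:ℂ) * q.derivative.eval (a:ℂ) - p.derivative.eval (a:ℂ) * q.eval (a:ℂ)) := by
    apply intervalIntegral.integral_eq_sub_of_hasDerivAt
    · intro x _
      have h := ((polyEval_hasDerivAt p x).fun_mul (polyEval_hasDerivAt q.derivative x)).fun_sub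
        ((polyEval_hasDerivAt p.derivative x).fun_mul (polyEval_hasDerivAt q x))
      convert h using 1
      ring
    · exact (((contPolyEval p).mul (contPolyEval q.derivative.derivative)).sub
        ((contPolyEval p.derivative.derivative).mul (contPolyEval q))).intervalIntegrable a b
  have h1 : IntervalIntegrable (fun x : ℝ => p.eval (x:ℂ) * (q.derivative.derivative).eval (x:ℂ)) volume a b :=
    ((contPolyEval p).mul (contPolyEval q.derivative.derivative)).intervalIntegrable a b
  have h2 : IntervalIntegrable (fun x : ℝ => (p.derivative.derivative).eval (x:ℂ) * q.eval (x:ℂ)) volume a b :=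
    ((contPolyEval p.derivative.derivative).mul (contPolyEval q)).intervalIntegrable a b
  rw [intervalIntegral.integral_sub h1 h2] at key
  linear_combination key

lemma lag_expand (k : ℕ) (p : Polynomial ℂ) (hp : p.natDegree ≤ k) (x : ℂ) :
    p.eval x = ∑ i : Fin (k+1),
      p.eval ((i:ℕ):ℂ) * (Lagrange.basis Finset.univ (fun i : Fin (k+1) => ((i:ℕ):ℂ)) i).eval x := by
  have hvs : Set.InjOn (fun i : Fin (k+1) => ((i:ℕ):ℂ)) ↑(Finset.univ : Finset (Fin (k+1))) := by
    intro i _ j _ h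
    exact Fin.ext (Nat.cast_injective h)
  have hdeg : p.degree < (Finset.univ : Finset (Fin (k+1))).card := by
    simp only [Finset.card_univ, Fintype.card_fin]
    calc p.degree ≤ p.natDegree := Polynomial.degree_le_natDegree
    _ < (k+1 : ℕ) := by exact_mod_cast Nat.lt_succ_of_le hp
  have := Lagrange.eq_interpolate hvs hdeg
  conv_lhs => rw [this]
  rw [Lagrange.interpolate_apply, Polynomial.eval_finset_sum]
  simp [Polynomial.eval_mul]

lemma intervalIntegral_re (f : ℝ → ℂ) (a b : ℝ) (hf : IntervalIntegrable f volume a b) :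
    (∫ x in a..b, (f x).re) = (∫ x in a..b, f x).re := by
  simp only [intervalIntegral, ← RCLike.re_eq_complex_re, integral_re hf.1, integral_re hf.2, map_sub]

lemma norm_sq_eq_re_mul_conj (z : ℂ) : ‖z‖^2 = (z * (starRingEnd ℂ) z).re := by
  rw [Complex.mul_conj]
  simp [Complex.sq_norm]

lemma int_expand {n : ℕ} (B : Fin n → ℝ → ℂ) (hB : ∀ i, Continuous (B i))
    (a b : Fin n → ℂ) (lo hi : ℝ) :
    (∫ x in lo..hi, (∑ i, a i * B i x) * (starRingEnd ℂ) (∑ i, b i * B i x)) =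
      ∑ i, ∑ i', (a i * (starRingEnd ℂ) (b i')) *
        ∫ x in lo..hi, B i x * (starRingEnd ℂ) (B i' x) := by
  have hint : ∀ x : ℝ, (∑ i, a i * B i x) * (starRingEnd ℂ) (∑ i, b i * B i x)
      = ∑ i, ∑ i', (a i * (starRingEnd ℂ) (b i')) * (B i x * (starRingEnd ℂ) (B i' x)) := by
    intro x
    rw [map_sum, Finset.sum_mul_sum]
    apply Finset.sum_congr rfl; intro i _
    apply Finset.sum_congr rfl; intro i' _
    rw [map_mul]; ring
  simp_rw [hint]
  rw [intervalIntegral.integral_finset_sum]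
  · apply Finset.sum_congr rfl; intro i _
    rw [intervalIntegral.integral_finset_sum]
    · exact Finset.sum_congr rfl fun i' _ => intervalIntegral.integral_const_mul _ _
    · intro i' _
      exact (continuous_const.mul ((hB i).mul ((hB i').star))).intervalIntegrable _ _
  · intro i _
    apply Continuous.intervalIntegrable
    continuity

lemma cell_hasDerivAt (k : ℕ) (lo hi : ℝ) (f : ℝ → ℝ → ℂ) (ft : ℝ → ℂ) (t : ℝ)
    (hpoly : ∀ s, ∃ p : Polynomial ℂ, p.natDegree ≤ k ∧ f s = fun x : ℝ => p.eval (x:ℂ))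
    (hft : ∀ x : ℝ, HasDerivAt (fun s => f s x) (ft x) t) :
    HasDerivAt (fun s => ∫ x in lo..hi, ‖f s x‖^2)
      (2 * (∫ x in lo..hi, ft x * (starRingEnd ℂ) (f t x)).re) t := by
  set B : Fin (k+1) → ℝ → ℂ :=
    fun i x => (Lagrange.basis Finset.univ (fun i : Fin (k+1) => ((i:ℕ):ℂ)) i).eval (x:ℂ) with hB
  have hBc : ∀ i, Continuous (B i) := fun i => contPolyEval _
  set c : Fin (k+1) → ℝ → ℂ := fun i s => f s ((i:ℕ):ℝ) with hcdef
  have hexp : ∀ s x, f s x = ∑ i, c i s * B i x := by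
    intro s x
    obtain ⟨p, hp, hfp⟩ := hpoly s
    have := lag_expand k p hp (x:ℂ)
    rw [hfp]
    simp only [hB, hcdef, hfp]
    push_cast
    exact this
  have hc : ∀ i, HasDerivAt (fun s => c i s) (ft ((i:ℕ):ℝ)) t := fun i => hft _
  have hftexp : ∀ x : ℝ, ft x = ∑ i : Fin (k+1), ft ((i:ℕ):ℝ) * B i x := by
    intro x
    have h1 : HasDerivAt (fun s => ∑ i : Fin (k+1), c i s * B i x)
        (∑ i : Fin (k+1), ft ((i:ℕ):ℝ) * B i x) t :=
      HasDerivAt.fun_sum fun i _ => (hc i).mul_const _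
    have h2 : (fun s => ∑ i, c i s * B i x) = fun s => f s x :=
      funext fun s => (hexp s x).symm
    rw [h2] at h1
    exact ((hft x).unique h1)
  set C : Fin (k+1) → Fin (k+1) → ℂ :=
    fun i i' => ∫ x in lo..hi, B i x * (starRingEnd ℂ) (B i' x) with hC
  have hCconj : ∀ i i', (starRingEnd ℂ) (C i i') = C i' i := by
    intro i i'
    rw [hC, ← intervalIntegral_conj]
    congr 1
    funext x
    rw [map_mul, Complex.conj_conj, mul_comm]
  have hE : (fun s => ∫ x in lo..hi, ‖f s x‖^2)
      = fun s => ∑ i, ∑ i', ((c i s * (starRingEnd ℂ) (c i' s)) * C i i').re := by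
    funext s
    have : (fun x : ℝ => ‖f s x‖^2)
        = fun x : ℝ => ((∑ i, c i s * B i x) * (starRingEnd ℂ) (∑ i, c i s * B i x)).re := by
      funext x
      rw [← hexp s x, norm_sq_eq_re_mul_conj]
    have hcont : Continuous fun x : ℝ =>
        (∑ i, c i s * B i x) * (starRingEnd ℂ) (∑ i, c i s * B i x) := by
      have h1 : Continuous fun x : ℝ => ∑ i, c i s * B i x :=
        continuous_finset_sum _ fun i _ => continuous_const.mul (hBc i)
      exact h1.mul h1.star
    rw [this, intervalIntegral_re _ _ _ (hcont.intervalIntegrable _ _),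
      int_expand B hBc _ _ lo hi]
    rw [Complex.re_sum]
    exact Finset.sum_congr rfl fun i _ => (Complex.re_sum _ _)
  rw [hE]
  have hD : HasDerivAt (fun s => ∑ i : Fin (k+1), ∑ i' : Fin (k+1),
      ((c i s * (starRingEnd ℂ) (c i' s)) * C i i').re)
      (∑ i : Fin (k+1), ∑ i' : Fin (k+1),
        (((ft ((i:ℕ):ℝ) * (starRingEnd ℂ) (c i' t)
          + c i t * (starRingEnd ℂ) (ft ((i':ℕ):ℝ))) * C i i').re)) t := by
    apply HasDerivAt.fun_sum; intro i _
    apply HasDerivAt.fun_sum; intro i' _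
    have hg : HasDerivAt (fun s => (c i s * (starRingEnd ℂ) (c i' s)) * C i i')
        ((ft ((i:ℕ):ℝ) * (starRingEnd ℂ) (c i' t)
          + c i t * (starRingEnd ℂ) (ft ((i':ℕ):ℝ))) * C i i') t := by
      exact ((hc i).mul ((hc i').star)).mul_const (C i i')
    exact Complex.reCLM.hasFDerivAt.comp_hasDerivAt t hg
  convert hD using 1
  have hInt : (∫ x in lo..hi, ft x * (starRingEnd ℂ) (f t x))
      = ∑ i : Fin (k+1), ∑ i' : Fin (k+1),
        (ft ((i:ℕ):ℝ) * (starRingEnd ℂ) (c i' t)) * C i i' := by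
    have h : (fun x : ℝ => ft x * (starRingEnd ℂ) (f t x))
        = fun x => (∑ i : Fin (k+1), ft ((i:ℕ):ℝ) * B i x) *
            (starRingEnd ℂ) (∑ i : Fin (k+1), c i t * B i x) := by
      funext x; rw [← hftexp x, ← hexp t x]
    rw [h, int_expand B hBc _ _ lo hi]
  rw [hInt, Complex.re_sum]
  simp_rw [Complex.re_sum, add_mul, Complex.add_re, Finset.sum_add_distrib]
  have hswap : (∑ i : Fin (k+1), ∑ i' : Fin (k+1),
        ((c i t * (starRingEnd ℂ) (ft ((i':ℕ):ℝ))) * C i i').re)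
      = ∑ i : Fin (k+1), ∑ i' : Fin (k+1),
        ((ft ((i:ℕ):ℝ) * (starRingEnd ℂ) (c i' t)) * C i i').re := by
    rw [Finset.sum_comm]
    apply Finset.sum_congr rfl; intro a _
    apply Finset.sum_congr rfl; intro b _
    rw [← Complex.conj_re ((ft ((a:ℕ):ℝ) * (starRingEnd ℂ) (c b t)) * C a b)]
    congr 1
    rw [map_mul, map_mul, Complex.conj_conj, hCconj]
    ring
  rw [hswap]
  ring


lemma Aform_symm {N : ℕ} [NeZero N] (M : Mesh N) (k : ℕ) (α₁ β₁ β₂ : ℝ)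
    (u v : Fin N → ℝ → ℂ) (hu : M.InVhk k u) (hv : M.InVhk k v) :
    M.Aform α₁ β₁ β₂ u v = M.Aform α₁ β₁ β₂ v u := by
  classical
  choose pu hpud hpu using hu
  choose pv hpvd hpv using hv
  have hdu : ∀ j, dxB u j = fun x : ℝ => ((pu j).derivative).eval (x:ℂ) := by
    intro j
    show (fun x => deriv (u j) x) = _
    rw [hpu j, deriv_polyEval]
  have hdv : ∀ j, dxB v j = fun x : ℝ => ((pv j).derivative).eval (x:ℂ) := by
    intro j
    show (fun x => deriv (v j) x) = _
    rw [hpv j, deriv_polyEval]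
  have hint : ∀ j, ((∫ x in M.lo j..M.hi j, u j x * deriv (deriv (v j)) x)
      - ∫ x in M.lo j..M.hi j, v j x * deriv (deriv (u j)) x)
      = (M.trM u j * M.trM (dxB v) j - M.trM (dxB u) j * M.trM v j)
        - (u j (M.lo j) * dxB v j (M.lo j) - dxB u j (M.lo j) * v j (M.lo j)) := by
    intro j
    simp only [Mesh.trM, hdu j, hdv j, hpu j, hpv j, deriv_polyEval]
    have hcomm2 : (∫ x in M.lo j..M.hi j,
        ((pu j).derivative.derivative).eval (x:ℂ) * (pv j).eval (x:ℂ))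
        = ∫ x in M.lo j..M.hi j, (pv j).eval (x:ℂ) * ((pu j).derivative.derivative).eval (x:ℂ) := by
      apply intervalIntegral.integral_congr
      intro x _
      exact mul_comm _ _
    linear_combination (poly_ibp (pu j) (pv j) (M.lo j) (M.hi j)) + hcomm2
  -- abbreviations
  set FM : Fin N → ℂ := fun j =>
    M.trM u j * M.trM (dxB v) j - M.trM (dxB u) j * M.trM v j with hFM
  set FL : Fin N → ℂ := fun j =>
    u j (M.lo j) * dxB v j (M.lo j) - dxB u j (M.lo j) * v j (M.lo j) with hFL
  set fd : Fin N → ℂ := fun j =>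
    (M.hatF α₁ β₂ u j * M.jmp (dxB v) j - M.tilF α₁ β₁ u j * M.jmp v j)
    - (M.hatF α₁ β₂ v j * M.jmp (dxB u) j - M.tilF α₁ β₁ v j * M.jmp u j) with hfd
  have hshift : (∑ j, FL j) = ∑ j, FL (j + 1) :=
    (Fintype.sum_equiv (Equiv.addRight (1 : Fin N)) (fun j => FL (j + 1)) FL
      (fun j => rfl)).symm
  have hFP : ∀ j : Fin N, FL (j + 1)
      = M.trP u j * M.trP (dxB v) j - M.trP (dxB u) j * M.trP v j := fun j => rfl
  have key : M.Aform α₁ β₁ β₂ u v - M.Aform α₁ β₁ β₂ v u = 0 := by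
    have e1 : M.Aform α₁ β₁ β₂ u v - M.Aform α₁ β₁ β₂ v u
        = (∑ j, ((∫ x in M.lo j..M.hi j, u j x * deriv (deriv (v j)) x)
            - ∫ x in M.lo j..M.hi j, v j x * deriv (deriv (u j)) x)) + ∑ j, fd j := by
      simp only [Mesh.Aform, hfd, Finset.sum_sub_distrib]
      ring
    rw [e1]
    have e2 : (∑ j, ((∫ x in M.lo j..M.hi j, u j x * deriv (deriv (v j)) x)
        - ∫ x in M.lo j..M.hi j, v j x * deriv (deriv (u j)) x)) = ∑ j, (FM j - FL j) :=
      Finset.sum_congr rfl fun j _ => hint j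
    rw [e2, Finset.sum_sub_distrib, hshift]
    rw [← Finset.sum_sub_distrib, ← Finset.sum_add_distrib]
    apply Finset.sum_eq_zero
    intro j _
    rw [hFP j]
    simp only [hFM, hfd, Mesh.hatF, Mesh.tilF, Mesh.avg, Mesh.jmp]
    ring
  linear_combination key


lemma inVhk_conj {N : ℕ} [NeZero N] (M : Mesh N) (k : ℕ) (u : Fin N → ℝ → ℂ)
    (hu : M.InVhk k u) : M.InVhk k (fun j x => (starRingEnd ℂ) (u j x)) := by
  intro j
  obtain ⟨p, hpd, hpe⟩ := hu j
  refine ⟨p.map (starRingEnd ℂ), le_trans Polynomial.natDegree_map_le hpd, ?_⟩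
  funext x
  show (starRingEnd ℂ) (u j x) = _
  rw [hpe, ← conj_polyEval]

lemma Aform_conj {N : ℕ} [NeZero N] (M : Mesh N) (k : ℕ) (α₁ β₁ β₂ : ℝ)
    (u v : Fin N → ℝ → ℂ) (hu : M.InVhk k u) (hv : M.InVhk k v) :
    M.Aform α₁ β₁ β₂ (fun j x => (starRingEnd ℂ) (u j x)) (fun j x => (starRingEnd ℂ) (v j x))
      = (starRingEnd ℂ) (M.Aform α₁ β₁ β₂ u v) := by
  classical
  choose pu hpud hpu using hu
  choose pv hpvd hpv using hv
  have hdu : ∀ j, dxB u j = fun x : ℝ => ((pu j).derivative).eval (x:ℂ) := by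
    intro j; show (fun x => deriv (u j) x) = _; rw [hpu j, deriv_polyEval]
  have hdv : ∀ j, dxB v j = fun x : ℝ => ((pv j).derivative).eval (x:ℂ) := by
    intro j; show (fun x => deriv (v j) x) = _; rw [hpv j, deriv_polyEval]
  have hmapu : ∀ j, (fun x : ℝ => (starRingEnd ℂ) (u j x))
      = fun x : ℝ => ((pu j).map (starRingEnd ℂ)).eval (x:ℂ) := by
    intro j; funext x; rw [hpu j]; exact conj_polyEval _ x
  have hmapv : ∀ j, (fun x : ℝ => (starRingEnd ℂ) (v j x))
      = fun x : ℝ => ((pv j).map (starRingEnd ℂ)).eval (x:ℂ) := by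
    intro j; funext x; rw [hpv j]; exact conj_polyEval _ x
  have hdxcu : ∀ j, dxB (fun j x => (starRingEnd ℂ) (u j x)) j
      = fun x : ℝ => (starRingEnd ℂ) (dxB u j x) := by
    intro j
    show (fun x => deriv (fun x : ℝ => (starRingEnd ℂ) (u j x)) x) = _
    rw [hmapu j, deriv_polyEval, Polynomial.derivative_map, hdu j]
    funext x
    exact (conj_polyEval _ x).symm
  have hdxcv : ∀ j, dxB (fun j x => (starRingEnd ℂ) (v j x)) j
      = fun x : ℝ => (starRingEnd ℂ) (dxB v j x) := by
    intro j
    show (fun x => deriv (fun x : ℝ => (starRingEnd ℂ) (v j x)) x) = _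
    rw [hmapv j, deriv_polyEval, Polynomial.derivative_map, hdv j]
    funext x
    exact (conj_polyEval _ x).symm
  have h2vc : ∀ j, deriv (deriv (fun x : ℝ => (starRingEnd ℂ) (v j x)))
      = fun x : ℝ => (starRingEnd ℂ) (((pv j).derivative.derivative).eval (x:ℂ)) := by
    intro j
    rw [hmapv j, deriv_polyEval, deriv_polyEval, Polynomial.derivative_map,
      Polynomial.derivative_map]
    funext x
    exact (conj_polyEval _ x).symm
  have h2v : ∀ j, deriv (deriv (v j))
      = fun x : ℝ => (((pv j).derivative.derivative).eval (x:ℂ)) := by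
    intro j
    rw [hpv j, deriv_polyEval, deriv_polyEval]
  simp only [Mesh.Aform, map_add, map_sum]
  congr 1
  · apply Finset.sum_congr rfl
    intro j _
    rw [← intervalIntegral_conj]
    apply intervalIntegral.integral_congr
    intro x _
    simp only [map_mul, h2vc j, h2v j]
  · apply Finset.sum_congr rfl
    intro j _
    simp only [Mesh.hatF, Mesh.tilF, Mesh.avg, Mesh.jmp, Mesh.trM, Mesh.trP, hdxcu, hdxcv,
      map_sub, map_add, map_mul, map_div₀, Complex.conj_ofReal, map_ofNat]

/-- the semidiscrete UWDG scheme conserves the discrete `L²` energy: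
`d/dt ‖u_h(t)‖² = 0` for all `t`. -/
theorem uwdg_energy_conservation {N : ℕ} [NeZero N] (M : Mesh N) (k : ℕ)
    (α₁ β₁ β₂ : ℝ) (uh uht : ℝ → Fin N → ℝ → ℂ)
    (hsol : M.IsUWDG k α₁ β₁ β₂ uh uht) :
    ∀ t : ℝ,
      HasDerivAt (fun s => ∑ j, ∫ x in M.lo j..M.hi j, ‖uh s j x‖ ^ 2) 0 t := by
  intro t
  obtain ⟨hInV, hder, hscheme⟩ := hsol
  have huc : M.InVhk k (fun j x => (starRingEnd ℂ) (uh t j x)) :=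
    inVhk_conj M k (uh t) (hInV t)
  have hcell : ∀ j : Fin N, HasDerivAt (fun s => ∫ x in M.lo j..M.hi j, ‖uh s j x‖^2)
      (2 * (∫ x in M.lo j..M.hi j, uht t j x * (starRingEnd ℂ) (uh t j x)).re) t :=
    fun j => cell_hasDerivAt k (M.lo j) (M.hi j) (fun s x => uh s j x) (fun x => uht t j x) t
      (fun s => hInV s j) (fun x => hder t j x)
  have hsum := HasDerivAt.fun_sum (fun j (_ : j ∈ (Finset.univ : Finset (Fin N))) => hcell j)
  refine hsum.congr_deriv ?_
  have hscheq := hscheme t (fun j x => (starRingEnd ℂ) (uh t j x)) huc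
  set A := M.Aform α₁ β₁ β₂ (uh t) (fun j x => (starRingEnd ℂ) (uh t j x)) with hA
  have hsumA : (∑ j, ∫ x in M.lo j..M.hi j, uht t j x * (starRingEnd ℂ) (uh t j x))
      = Complex.I * A := by
    linear_combination hscheq
  have hconjA : (starRingEnd ℂ) A = A := by
    have h1 := Aform_conj M k α₁ β₁ β₂ (uh t) (fun j x => (starRingEnd ℂ) (uh t j x))
      (hInV t) huc
    simp only [Complex.conj_conj] at h1
    rw [Aform_symm M k α₁ β₁ β₂ _ _ huc (hInV t)] at h1
    exact h1.symm
  have him : A.im = 0 := by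
    have h := congrArg Complex.im hconjA
    simp only [Complex.conj_im] at h
    linarith
  have hval : (∑ j, 2 * (∫ x in M.lo j..M.hi j,
      uht t j x * (starRingEnd ℂ) (uh t j x)).re) = 2 * (Complex.I * A).re := by
    rw [← Finset.mul_sum, ← Complex.re_sum, hsumA]
  rw [hval]
  simp [Complex.mul_re, him]
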